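/- Let φ : L²(𝕋^d) → ℝ be C² and let φ̃(f) := φ(ρ) where ρ = ∫_V f dμ. If (Lf, Dφ̃(f)) = 0 for all f, where Lf = ∫_V f dμ − f, then conversely any C¹ function φ on L²(𝕋^d×V) satisfying (Lf, Dφ(f)) = 0 for all f depends only on ρ: φ(f) = φ(∫_V f dμ) for all f ∈ L²(𝕋^d×V). -/

import Mathlib

/-! Along the segment `t ↦ f + t • (P f - f)` from `f` to `P f`, idempotence of `P` gives
`P g - g = (1 - t) • (P f - f)`, so the hypothesis `Dφ g (P g - g) = 0` says that the derivative of
`φ` in the direction of the segment vanishes for `t < 1`. By the mean value theorem `φ` takes the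
same value at both ends. -/

open AffineMap Set

theorem ContinuousLinearMap.apply_lineMap_sub_lineMap_of_isIdempotentElem {𝕜 E : Type*}
    [CommRing 𝕜] [AddCommGroup E] [Module 𝕜 E] [TopologicalSpace E] {P : E →L[𝕜] E}
    (hP : IsIdempotentElem P) (f : E) (t : 𝕜) :
    P (lineMap f (P f) t) - lineMap f (P f) t = (1 - t) • (P f - f) := by
  have hPP : P (P f) = P f := congr($hP f)
  simp only [lineMap_apply_module', map_add, map_smul, map_sub, hPP]
  module

theorem eq_of_hasFDerivAt_apply_sub_eq_zero_on_segment {E : Type*} [NormedAddCommGroup E]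
    [NormedSpace ℝ E] {φ : E → ℝ} {Dφ : E → E →L[ℝ] ℝ} {x y : E}
    (hdiff : ∀ t ∈ Icc (0 : ℝ) 1, HasFDerivAt φ (Dφ (lineMap x y t)) (lineMap x y t))
    (hdir : ∀ t ∈ Ioo (0 : ℝ) 1, Dφ (lineMap x y t) (y - x) = 0) :
    φ x = φ y := by
  have hderiv : ∀ t ∈ Icc (0 : ℝ) 1,
      HasDerivAt (φ ∘ lineMap x y) (Dφ (lineMap x y t) (y - x)) t := fun t ht =>
    (hdiff t ht).comp_hasDerivAt t hasDerivAt_lineMap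
  obtain ⟨c, hc, hslope⟩ := exists_hasDerivAt_eq_slope (φ ∘ lineMap x y) _ zero_lt_one
    (fun t ht => (hderiv t ht).continuousAt.continuousWithinAt)
    (fun t ht => hderiv t (Ioo_subset_Icc_self ht))
  rw [hdir c hc] at hslope
  simpa [sub_eq_zero, eq_comm] using hslope

theorem stmt12_general {E : Type*} [NormedAddCommGroup E] [NormedSpace ℝ E]
    (Pavg : E →L[ℝ] E) (hproj : Pavg.comp Pavg = Pavg)
    (φ : E → ℝ) (Dφ : E → (E →L[ℝ] ℝ))
    (hdiff : ∀ f, HasFDerivAt φ (Dφ f) f)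
    (horth : ∀ f, Dφ f (Pavg f - f) = 0) :
    ∀ f, φ f = φ (Pavg f) := by
  intro f
  refine eq_of_hasFDerivAt_apply_sub_eq_zero_on_segment (fun t _ => hdiff _) fun t ht => ?_
  have h := horth (lineMap f (Pavg f) t)
  rw [Pavg.apply_lineMap_sub_lineMap_of_isIdempotentElem hproj, map_smul, smul_eq_mul] at h
  exact (mul_eq_zero.mp h).resolve_left (sub_ne_zero.mpr ht.2.ne')

/-- Any `C¹` function `φ` on `L²(x,v)` satisfying `(Lf, Dφ(f)) = 0` for all `f`,
where `L f = Pf − f` and `P` is the projection `f ↦ ρ = ∫_V f dμ` onto `v`-independent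
functions, depends only on `ρ`: `φ(f) = φ(Pf)` for all `f`. -/
theorem stmt12 {E : Type*} [NormedAddCommGroup E] [NormedSpace ℝ E]
    (Pavg : E →L[ℝ] E) (hproj : Pavg.comp Pavg = Pavg)
    (φ : E → ℝ) (Dφ : E → (E →L[ℝ] ℝ))
    (hdiff : ∀ f, HasFDerivAt φ (Dφ f) f)
    (hcont : Continuous Dφ)
    (horth : ∀ f, Dφ f (Pavg f - f) = 0) :
    ∀ f, φ f = φ (Pavg f) :=
  stmt12_general Pavg hproj φ Dφ hdiff horth
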